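/- For every integer n ≥ 0, m_{2n}(√2) = (δ_{2n+2} − δ_{2n+2}^{−1}) / (4√2 · (n+1) · (2n+1)), where δ_m = (√2 + 1)^m. -/

import Mathlib

/-!
Write `S = S(√2)` and `m_k = E[S^k]`. Conditioning on the first sign, `√2 S = X_0 + S'` with `S'`
an independent copy of `S`, so `2^(k/2) m_k = ∑_j C(k, j) E[X_0^(k-j)] m_j`. For `k = 2n` the term
`j = 2n` has coefficient `1 < 2^n` and the odd moments carry weight `E[X_0^odd] = 0`, so the even
moments are determined by `m_0 = 1`. The closed form satisfies the same recursion: after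
`C(2n, j) / ((j+1)(j+2)) = C(2n+2, j+2) / ((2n+1)(2n+2))` the sum becomes a binomial sum at
`δ = √2 + 1` and `δ⁻¹ = √2 - 1`, where `1 + δ = √2 δ` and `1 - δ⁻¹ = √2 δ⁻¹`.

The self-similarity is exact only in law, so it is used on the truncated sums `∑_{i<N}`, whose
expectations are finite averages over sign patterns, and passed to the limit by dominated
convergence.
-/

open MeasureTheory ProbabilityTheory Finset

/-- `E[ε^i]` for a uniform random sign `ε`. -/
noncomputable def signMoment (i : ℕ) : ℝ := (1 + (-1) ^ i) / 2

lemma signMoment_of_even {i : ℕ} (hi : Even i) : signMoment i = 1 := by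
  simp [signMoment, hi.neg_one_pow]

lemma signMoment_of_odd {i : ℕ} (hi : Odd i) : signMoment i = 0 := by
  simp [signMoment, hi.neg_one_pow]

lemma signMoment_add_two (i : ℕ) : signMoment (i + 2) = signMoment i := by
  simp [signMoment, pow_add]

lemma signMoment_two_mul_sub {n j : ℕ} (h : j ≤ 2 * n) :
    signMoment (2 * n - j) = signMoment j := by
  rcases Nat.even_or_odd j with hj | hj
  · rw [signMoment_of_even hj, signMoment_of_even ((Nat.even_sub h).2 (by simp [hj]))]
  · rw [signMoment_of_odd hj,
      signMoment_of_odd ((Nat.odd_sub h).2 (by simp [Nat.not_even_iff_odd.2 hj]))]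

lemma sum_choose_mul_signMoment_mul_pow (M : ℕ) (x : ℝ) :
    ∑ r ∈ range (M + 1), (M.choose r : ℝ) * signMoment r * x ^ r
      = ((1 + x) ^ M + (1 - x) ^ M) / 2 := by
  rw [add_comm 1 x, sub_eq_neg_add, add_pow, add_pow, ← sum_add_distrib, sum_div]
  refine sum_congr rfl fun r _ => ?_
  rw [neg_pow, signMoment]
  ring

/-- `signSumExpect r N g = E[g(∑_{i<N} r^(i+1) ε_i)]` for independent uniform signs `ε_i`. The
recursion conditions on `ε_0`: `∑_{i<N+1} r^(i+1) ε_i = r (ε_0 + ∑_{i<N} r^(i+1) ε_{i+1})`. -/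
noncomputable def signSumExpect (r : ℝ) : ℕ → (ℝ → ℝ) →ₗ[ℝ] ℝ
  | 0 => LinearMap.proj 0
  | N + 1 => (2⁻¹ : ℝ) •
      (signSumExpect r N ∘ₗ LinearMap.funLeft ℝ ℝ (fun x => r * (x + 1)) +
        signSumExpect r N ∘ₗ LinearMap.funLeft ℝ ℝ (fun x => r * (x - 1)))

namespace signSumExpect

variable (r : ℝ)

@[simp] lemma zero_apply (g : ℝ → ℝ) : signSumExpect r 0 g = g 0 := rfl

lemma succ_apply (N : ℕ) (g : ℝ → ℝ) :
    signSumExpect r (N + 1) g =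
      (signSumExpect r N (fun x => g (r * (x + 1))) +
        signSumExpect r N (fun x => g (r * (x - 1)))) / 2 := by
  change (2⁻¹ : ℝ) * (signSumExpect r N (fun x => g (r * (x + 1))) +
    signSumExpect r N (fun x => g (r * (x - 1)))) = _
  ring

lemma succ_apply_eq_shift (N : ℕ) (g : ℝ → ℝ) :
    signSumExpect r (N + 1) g =
      (signSumExpect r N (fun x => g (x + r ^ (N + 1))) +
        signSumExpect r N (fun x => g (x - r ^ (N + 1)))) / 2 := by
  induction N generalizing g with
  | zero => simp [succ_apply]
  | succ N ih =>
    rw [succ_apply, ih, ih, succ_apply, succ_apply]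
    simp only [pow_succ']
    ring_nf

lemma succ_pow (N k : ℕ) :
    signSumExpect r (N + 1) (· ^ k) =
      r ^ k * ∑ j ∈ range (k + 1),
        (k.choose j : ℝ) * signMoment (k - j) * signSumExpect r N (· ^ j) := by
  have hexpand (s : ℝ) : (fun x : ℝ => (r * (x + s)) ^ k) =
      ∑ j ∈ range (k + 1), (r ^ k * k.choose j * s ^ (k - j)) • (· ^ j) := by
    ext x
    simp only [Finset.sum_apply, Pi.smul_apply, smul_eq_mul, mul_pow, add_pow, mul_sum]
    exact sum_congr rfl fun j _ => by ring
  rw [succ_apply]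
  simp only [sub_eq_add_neg, hexpand, map_sum, map_smul, smul_eq_mul, ← sum_add_distrib,
    sum_div, mul_sum]
  refine sum_congr rfl fun j _ => ?_
  rw [signMoment]
  ring

end signSumExpect

/-- The `k`-th moment of `U + √2 V` for independent `U, V` uniform on `[-1, 1]`, which is the law
of the Bernoulli convolution at `√2` (split the series into its even- and odd-indexed terms). -/
noncomputable def sqrtTwoMoment (k : ℕ) : ℝ :=
  ((√2 + 1) ^ (k + 2) - ((√2 + 1) ^ (k + 2))⁻¹) / (2 * √2 * (k + 1) * (k + 2))

lemma inv_sqrt_two_add_one : (√2 + 1)⁻¹ = √2 - 1 :=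
  inv_eq_of_mul_eq_one_right <| by ring_nf; norm_num

lemma sum_choose_mul_signMoment_mul_silverRatio_pow (n : ℕ) :
    ∑ r ∈ range (2 * n + 3), ((2 * n + 2).choose r : ℝ) * signMoment r *
        ((√2 + 1) ^ r - ((√2 + 1) ^ r)⁻¹)
      = 2 ^ n * ((√2 + 1) ^ (2 * n + 2) - ((√2 + 1) ^ (2 * n + 2))⁻¹) := by
  have hsplit := sum_choose_mul_signMoment_mul_pow (2 * n + 2)
  simp only [mul_sub, sum_sub_distrib, ← inv_pow, hsplit, inv_sqrt_two_add_one]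
  have h2 : (√2) ^ 2 = 2 := Real.sq_sqrt zero_le_two
  have hpow (x : ℝ) : (√2 * x) ^ (2 * n + 2) = 2 * 2 ^ n * x ^ (2 * n + 2) := by
    rw [mul_pow, show 2 * n + 2 = 2 * (n + 1) by ring, pow_mul, h2]; ring
  have hδ : 1 + (√2 + 1) = √2 * (√2 + 1) := by ring_nf; rw [h2]; ring
  have hδ' : 1 - (√2 - 1) = √2 * (√2 - 1) := by ring_nf; rw [h2]; ring
  rw [hδ, hδ', hpow, hpow, show 1 - (√2 + 1) = √2 * (-1) by ring,
    show 1 + (√2 - 1) = √2 * 1 by ring, hpow, hpow, Even.neg_one_pow ⟨n + 1, by ring⟩]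
  ring

lemma choose_mul_add_one_mul_add_two (m j : ℕ) :
    m.choose j * ((m + 1) * (m + 2)) = (m + 2).choose (j + 2) * ((j + 1) * (j + 2)) := by
  have h1 := Nat.add_one_mul_choose_eq m j
  have h2 := Nat.add_one_mul_choose_eq (m + 1) (j + 1)
  nlinarith [h1, h2]

lemma sum_choose_mul_signMoment_mul_sqrtTwoMoment (n : ℕ) :
    ∑ j ∈ range (2 * n + 1), ((2 * n).choose j : ℝ) * signMoment (2 * n - j) * sqrtTwoMoment j =
      2 ^ n * sqrtTwoMoment (2 * n) := by
  set c : ℝ := 2 * √2 * (2 * n + 1) * (2 * n + 2)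
  set g : ℕ → ℝ := fun r =>
    ((2 * n + 2).choose r : ℝ) * signMoment r * ((√2 + 1) ^ r - ((√2 + 1) ^ r)⁻¹)
  have hterm : ∀ j ∈ range (2 * n + 1),
      ((2 * n).choose j : ℝ) * signMoment (2 * n - j) * sqrtTwoMoment j = g (j + 2) / c := by
    intro j hj
    have hchoose : ((2 * n).choose j : ℝ) * ((2 * n + 1) * (2 * n + 2)) =
        (2 * n + 2).choose (j + 2) * ((j + 1) * (j + 2)) := by
      exact_mod_cast choose_mul_add_one_mul_add_two (2 * n) j
    rw [signMoment_two_mul_sub (Nat.lt_succ_iff.1 (mem_range.1 hj)), ← signMoment_add_two,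
      sqrtTwoMoment]
    simp only [g, c]
    generalize (√2 + 1) ^ (j + 2) - ((√2 + 1) ^ (j + 2))⁻¹ = D
    rw [mul_div_assoc', div_eq_div_iff (by positivity) (by positivity)]
    linear_combination (signMoment (j + 2) * D * (2 * √2)) * hchoose
  have hshift : ∑ r ∈ range (2 * n + 3), g r = ∑ j ∈ range (2 * n + 1), g (j + 2) := by
    rw [sum_range_succ', sum_range_succ']
    simp [g, signMoment_of_odd odd_one]
  rw [sum_congr rfl hterm, ← sum_div, ← hshift, sum_choose_mul_signMoment_mul_silverRatio_pow,
    sqrtTwoMoment]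
  simp only [c]
  push_cast
  field_simp

lemma sqrtTwoMoment_zero : sqrtTwoMoment 0 = 1 := by
  rw [sqrtTwoMoment, ← inv_pow, inv_sqrt_two_add_one]
  field_simp
  ring_nf

lemma sum_choose_mul_signMoment_mul_congr {n : ℕ} {M M' : ℕ → ℝ}
    (h : ∀ i < n, M (2 * i) = M' (2 * i)) :
    ∑ j ∈ range (2 * n), ((2 * n).choose j : ℝ) * signMoment (2 * n - j) * M j =
      ∑ j ∈ range (2 * n), ((2 * n).choose j : ℝ) * signMoment (2 * n - j) * M' j := by
  refine sum_congr rfl fun j hj => ?_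
  have hj : j < 2 * n := mem_range.1 hj
  rcases Nat.even_or_odd j with ⟨i, rfl⟩ | hodd
  · rw [← two_mul, h i (by omega)]
  · rw [signMoment_of_odd ((Nat.odd_sub hj.le).2 (by simp [Nat.not_even_iff_odd.2 hodd]))]
    simp

theorem eq_sqrtTwoMoment_of_recursion {M : ℕ → ℝ} (h0 : M 0 = 1)
    (hrec : ∀ k, M k = (√2)⁻¹ ^ k *
      ∑ j ∈ range (k + 1), (k.choose j : ℝ) * signMoment (k - j) * M j)
    (n : ℕ) : M (2 * n) = sqrtTwoMoment (2 * n) := by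
  induction n using Nat.strong_induction_on with
  | _ n ih =>
  rcases n.eq_zero_or_pos with rfl | hn
  · simpa [sqrtTwoMoment_zero] using h0
  have hpow : (√2)⁻¹ ^ (2 * n) = (2 ^ n)⁻¹ := by
    rw [inv_pow, pow_mul, Real.sq_sqrt zero_le_two]
  have hM := hrec (2 * n)
  have hF := sum_choose_mul_signMoment_mul_sqrtTwoMoment n
  rw [hpow, sum_range_succ, sum_choose_mul_signMoment_mul_congr ih] at hM
  rw [sum_range_succ] at hF
  simp only [Nat.choose_self, Nat.sub_self, signMoment_of_even Even.zero, Nat.cast_one,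
    one_mul] at hM hF
  have h2n : (2 : ℝ) ^ n - 1 ≠ 0 := (sub_pos.2 (one_lt_pow₀ one_lt_two hn.ne')).ne'
  have hdiff : ((2 : ℝ) ^ n - 1) * (M (2 * n) - sqrtTwoMoment (2 * n)) = 0 := by
    field_simp at hM
    linear_combination hM + hF
  simpa [h2n, sub_eq_zero] using hdiff

lemma abs_sum_mul_le_sum_abs {ι : Type*} (s : Finset ι) (c x : ι → ℝ) (hx : ∀ i, |x i| ≤ 1) :
    |∑ i ∈ s, c i * x i| ≤ ∑ i ∈ s, |c i| :=
  (abs_sum_le_sum_abs _ _).trans <| sum_le_sum fun i _ => by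
    rw [abs_mul]; exact mul_le_of_le_one_right (abs_nonneg _) (hx i)

lemma Continuous.exists_bound_of_abs_le {g : ℝ → ℝ} (hg : Continuous g) (B : ℝ) :
    ∃ C, ∀ x, |x| ≤ B → ‖g x‖ ≤ C := by
  obtain ⟨C, hC⟩ := (isCompact_Icc (a := -B) (b := B)).exists_bound_of_continuousOn hg.continuousOn
  exact ⟨C, fun x hx => hC x (abs_le.1 hx)⟩

lemma integrable_comp_of_ae_abs_le {Ω : Type*} [MeasurableSpace Ω] {P : Measure Ω}
    [IsFiniteMeasure P] {W : Ω → ℝ} (hW : Measurable W) {B : ℝ} (hB : ∀ᵐ ω ∂P, |W ω| ≤ B)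
    {g : ℝ → ℝ} (hg : Continuous g) : Integrable (fun ω => g (W ω)) P := by
  obtain ⟨C, hC⟩ := hg.exists_bound_of_abs_le B
  exact .of_bound (hg.measurable.comp hW).aestronglyMeasurable C (hB.mono fun ω => hC _)

section Rademacher

variable {Ω : Type*} [MeasurableSpace Ω] {P : Measure Ω} [IsProbabilityMeasure P] {Y : Ω → ℝ}

lemma ae_eq_one_or_eq_neg_one (hY : Measurable Y) (h1 : P {ω | Y ω = 1} = 1 / 2)
    (h2 : P {ω | Y ω = -1} = 1 / 2) : ∀ᵐ ω ∂P, Y ω = 1 ∨ Y ω = -1 := by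
  have hset (s : ℝ) : MeasurableSet {ω | Y ω = s} := hY (measurableSet_singleton s)
  have hdisj : Disjoint {ω | Y ω = 1} {ω | Y ω = -1} :=
    Set.disjoint_left.2 fun ω (h : Y ω = 1) (h' : Y ω = -1) => by linarith
  have hfull : P ({ω | Y ω = 1} ∪ {ω | Y ω = -1}) = 1 := by
    rw [measure_union hdisj (hset _), h1, h2, ENNReal.add_halves]
  exact mem_ae_iff.2 ((prob_compl_eq_zero_iff ((hset 1).union (hset _))).2 hfull)

lemma integral_comp_add_mul_of_indepFun {W : Ω → ℝ} (hW : Measurable W) (hY : Measurable Y)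
    (h1 : P {ω | Y ω = 1} = 1 / 2) (h2 : P {ω | Y ω = -1} = 1 / 2) (hWY : IndepFun W Y P)
    {g : ℝ → ℝ} (hg : Measurable g) (c : ℝ)
    (hplus : Integrable (fun ω => g (W ω + c)) P) (hminus : Integrable (fun ω => g (W ω - c)) P) :
    ∫ ω, g (W ω + c * Y ω) ∂P = (∫ ω, g (W ω + c) ∂P + ∫ ω, g (W ω - c) ∂P) / 2 := by
  have hset (s : ℝ) : MeasurableSet {ω | Y ω = s} := hY (measurableSet_singleton s)
  have hYW : Indep (MeasurableSpace.comap Y inferInstance)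
      (MeasurableSpace.comap W inferInstance) P := (IndepFun_iff_Indep _ _ _).1 hWY.symm
  have hslice (s : ℝ) (hs : P {ω | Y ω = s} = 1 / 2) (φ : ℝ → ℝ) (hφ : Measurable φ) :
      ∫ ω in {ω | Y ω = s}, φ (W ω) ∂P = (∫ ω, φ (W ω) ∂P) / 2 := by
    change ∫ ω in Y ⁻¹' {s}, _ ∂P = _
    rw [hYW.setIntegral_eq_mul hY.comap_le hW.aemeasurable ⟨{s}, measurableSet_singleton s, rfl⟩
      hφ.aestronglyMeasurable, measureReal_def, show P (Y ⁻¹' {s}) = 1 / 2 from hs]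
    norm_num
    ring
  have hae : (fun ω => g (W ω + c * Y ω)) =ᵐ[P]
      {ω | Y ω = 1}.indicator (fun ω => g (W ω + c)) +
        {ω | Y ω = -1}.indicator (fun ω => g (W ω - c)) := by
    filter_upwards [ae_eq_one_or_eq_neg_one hY h1 h2] with ω hω
    rcases hω with h | h <;> norm_num [Set.indicator, h, sub_eq_add_neg]
  rw [integral_congr_ae hae, integral_add' (hplus.indicator (hset 1)) (hminus.indicator (hset _)),
    integral_indicator (hset 1), integral_indicator (hset _),
    hslice 1 h1 (fun w => g (w + c)) (hg.comp (measurable_add_const c)),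
    hslice (-1) h2 (fun w => g (w - c)) (hg.comp (measurable_sub_const c))]
  ring

end Rademacher

structure IsRademacherSeq {Ω : Type*} [MeasurableSpace Ω] (P : Measure Ω) (X : ℕ → Ω → ℝ) :
    Prop where
  measurable : ∀ n, Measurable (X n)
  indep : iIndepFun X P
  prob_eq_one : ∀ n, P {ω | X n ω = 1} = 1 / 2
  prob_eq_neg_one : ∀ n, P {ω | X n ω = -1} = 1 / 2

namespace IsRademacherSeq

variable {Ω : Type*} [MeasurableSpace Ω] {P : Measure Ω} {X : ℕ → Ω → ℝ}

lemma ae_forall_abs_le_one [IsProbabilityMeasure P] (hX : IsRademacherSeq P X) :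
    ∀ᵐ ω ∂P, ∀ i, |X i ω| ≤ 1 :=
  ae_all_iff.2 fun i => (ae_eq_one_or_eq_neg_one (hX.measurable i) (hX.prob_eq_one i)
    (hX.prob_eq_neg_one i)).mono fun ω hω => by rcases hω with h | h <;> simp [h]

lemma indepFun_sum_range (hX : IsRademacherSeq P X) (c : ℕ → ℝ) (N : ℕ) :
    IndepFun (fun ω => ∑ i ∈ range N, c i * X i ω) (X N) P := by
  let c' i := if i < N then c i else 1
  have hscaled := (hX.indep.comp (fun i x => c' i * x) fun i => measurable_const_mul _)
    |>.indepFun_sum_range_succ (fun i => (hX.measurable i).const_mul _) N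
  convert hscaled using 1
  · ext ω
    simp only [Finset.sum_apply, Function.comp_apply]
    exact sum_congr rfl fun i hi => by simp [c', mem_range.1 hi]
  · ext ω
    simp [c']

lemma integral_comp_sum_eq_signSumExpect [IsProbabilityMeasure P] (hX : IsRademacherSeq P X)
    (r : ℝ) (N : ℕ) {g : ℝ → ℝ} (hg : Continuous g) :
    ∫ ω, g (∑ i ∈ range N, r ^ (i + 1) * X i ω) ∂P = signSumExpect r N g := by
  induction N generalizing g with
  | zero => simp
  | succ N ih =>
    set W := fun ω => ∑ i ∈ range N, r ^ (i + 1) * X i ω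
    have hW : Measurable W := Finset.measurable_sum _ fun i _ => (hX.measurable i).const_mul _
    have hWbound : ∀ᵐ ω ∂P, |W ω| ≤ ∑ i ∈ range N, |r ^ (i + 1)| :=
      hX.ae_forall_abs_le_one.mono fun ω hω => abs_sum_mul_le_sum_abs _ _ _ hω
    have hint (s : ℝ) : Integrable (fun ω => g (W ω + s)) P :=
      integrable_comp_of_ae_abs_le hW hWbound (hg.comp (continuous_add_const s))
    have ih' (s : ℝ) : ∫ ω, g (W ω + s) ∂P = signSumExpect r N (fun x => g (x + s)) :=
      ih (hg.comp (continuous_add_const s))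
    simp only [sum_range_succ]
    rw [integral_comp_add_mul_of_indepFun hW (hX.measurable N) (hX.prob_eq_one N)
        (hX.prob_eq_neg_one N) (hX.indepFun_sum_range _ N) hg.measurable _ (hint _)
        (by simpa only [sub_eq_add_neg] using hint _), signSumExpect.succ_apply_eq_shift]
    simp only [sub_eq_add_neg, ih']

lemma tendsto_signSumExpect [IsProbabilityMeasure P] (hX : IsRademacherSeq P X) {r : ℝ}
    (hr : |r| < 1) {g : ℝ → ℝ} (hg : Continuous g) :
    Filter.Tendsto (fun N => signSumExpect r N g) Filter.atTop
      (nhds (∫ ω, g (∑' i, r ^ (i + 1) * X i ω) ∂P)) := by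
  have hsum : Summable fun i => |r ^ (i + 1)| := by
    simpa [abs_pow, pow_succ] using (summable_geometric_of_lt_one (abs_nonneg r) hr).mul_right |r|
  obtain ⟨C, hC⟩ := hg.exists_bound_of_abs_le (∑' i, |r ^ (i + 1)|)
  simp only [← hX.integral_comp_sum_eq_signSumExpect r _ hg]
  refine tendsto_integral_of_dominated_convergence (fun _ => C)
    (fun N => (hg.measurable.comp (Finset.measurable_sum _ fun i _ =>
      (hX.measurable i).const_mul _)).aestronglyMeasurable) (integrable_const C)
    (fun N => hX.ae_forall_abs_le_one.mono fun ω hω => hC _ ?_) ?_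
  · exact (abs_sum_mul_le_sum_abs _ _ _ hω).trans
      (hsum.sum_le_tsum _ fun i _ => abs_nonneg _)
  · filter_upwards [hX.ae_forall_abs_le_one] with ω hω
    have hsumω : Summable fun i => r ^ (i + 1) * X i ω :=
      hsum.of_norm_bounded fun i => by
        rw [Real.norm_eq_abs, abs_mul]; exact mul_le_of_le_one_right (abs_nonneg _) (hω i)
    exact (hg.tendsto _).comp hsumω.hasSum.tendsto_sum_nat

theorem integral_tsum_pow [IsProbabilityMeasure P] (hX : IsRademacherSeq P X) {r : ℝ}
    (hr : |r| < 1) (k : ℕ) :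
    ∫ ω, (∑' i, r ^ (i + 1) * X i ω) ^ k ∂P = r ^ k * ∑ j ∈ range (k + 1),
      (k.choose j : ℝ) * signMoment (k - j) * ∫ ω, (∑' i, r ^ (i + 1) * X i ω) ^ j ∂P := by
  have hlim (j : ℕ) := hX.tendsto_signSumExpect hr (continuous_pow j)
  refine tendsto_nhds_unique ((hlim k).comp (Filter.tendsto_add_atTop_nat 1)) ?_
  simp only [Function.comp_def, signSumExpect.succ_pow]
  exact ((tendsto_finsetSum _ fun j _ => (hlim j).const_mul _).const_mul _)

end IsRademacherSeq

/-- `m_(2n)(√2) = (δ_(2n+2) - δ_(2n+2)⁻¹)/(4√2 (n+1)(2n+1))`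
where `δ_m = (√2+1)^m`. -/
theorem stmt_14 {Ω : Type*} [MeasurableSpace Ω] (P : Measure Ω) [IsProbabilityMeasure P]
    (X : ℕ → Ω → ℝ) (hmeas : ∀ n, Measurable (X n))
    (hindep : iIndepFun X P)
    (h1 : ∀ n, P {ω | X n ω = 1} = 1 / 2) (h2 : ∀ n, P {ω | X n ω = -1} = 1 / 2)
    (S : ℝ → Ω → ℝ)
    (hS : ∀ l : ℝ, 1 < l → ∀ ω, S l ω = ∑' n : ℕ, l ^ (-(n + 1 : ℤ)) * X n ω)
    (m : ℝ → ℕ → ℝ) (hm : ∀ l k, m l k = ∫ ω, (S l ω) ^ k ∂P)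
    (n : ℕ) :
    m (Real.sqrt 2) (2 * n) =
      ((Real.sqrt 2 + 1) ^ (2 * n + 2) - ((Real.sqrt 2 + 1) ^ (2 * n + 2))⁻¹) /
        (4 * Real.sqrt 2 * (n + 1) * (2 * n + 1)) := by
  have hX : IsRademacherSeq P X := ⟨hmeas, hindep, h1, h2⟩
  have hsqrt : 1 < √2 := Real.one_lt_sqrt_two
  have hr : |(√2)⁻¹| < 1 := by
    rw [abs_inv, abs_of_pos (by positivity)]; exact inv_lt_one_of_one_lt₀ hsqrt
  have hS' : S √2 = fun ω => ∑' i, (√2)⁻¹ ^ (i + 1) * X i ω := by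
    ext ω
    simp only [hS _ hsqrt ω, ← zpow_natCast, inv_zpow', Nat.cast_succ]
  have hmoment (k : ℕ) : m √2 k = ∫ ω, (∑' i, (√2)⁻¹ ^ (i + 1) * X i ω) ^ k ∂P := by
    rw [hm, hS']
  rw [eq_sqrtTwoMoment_of_recursion (M := m √2) (by simp [hm])
    (fun k => by simpa only [hmoment] using hX.integral_tsum_pow hr k) n, sqrtTwoMoment]
  push_cast
  ring
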